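/- Let ω ∈ A_1(φ) and η ≥ 2. Then there exists a constant C > 0 such that for every function f and every λ > 0, ω({x ∈ ℝⁿ : M_{L log L, φ, η} f(x) > λ}) ≤ C ∫_{ℝⁿ} Φ(|f(y)|/λ) ω(y) dy, where Φ(t) = t(1+log⁺ t). -/

import Mathlib

open MeasureTheory Real Filter
open scoped ENNReal NNReal BigOperators FourierTransform RealInnerProductSpace

noncomputable section

/-- Euclidean space `ℝⁿ`. -/
abbrev En (n : ℕ) : Type := EuclideanSpace ℝ (Fin n)

namespace Paper

variable {n : ℕ}

/-- The (closed) cube centered at `c` with sidelength `r`, sides parallel to the axes. -/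
def cube (c : En n) (r : ℝ) : Set (En n) := {x | ∀ i, |x i - c i| ≤ r / 2}

/-- Lebesgue measure of a cube, as a real number. -/
def cubeVol (c : En n) (r : ℝ) : ℝ := (volume (cube c r)).toReal

/-- `φ(t) = (1+t)^{α₀}`. -/
def phi (α₀ t : ℝ) : ℝ := (1 + t) ^ α₀

/-- A weight: a positive, locally integrable function. -/
def IsWeight (w : En n → ℝ) : Prop := (∀ x, 0 < w x) ∧ LocallyIntegrable w volume

/-- The measure `ω(E) = ∫_E ω dx`. -/
def wMeas (w : En n → ℝ) : Measure (En n) :=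
  volume.withDensity (fun x => ENNReal.ofReal (w x))

/-- The maximal operator `M_{φ,η}` applied to an `ℝ≥0∞`-valued function:
`sup_{Q ∋ x} (1/(φ(|Q|)^η |Q|)) ∫_Q g`. -/
def MphiG (α₀ η : ℝ) (g : En n → ℝ≥0∞) (x : En n) : ℝ≥0∞ :=
  ⨆ (c : En n) (r : ℝ) (_ : 0 < r) (_ : x ∈ cube c r),
    (∫⁻ y in cube c r, g y) /
      (ENNReal.ofReal ((phi α₀ (cubeVol c r)) ^ η) * volume (cube c r))

/-- `M_{φ,η} f(x) = sup_{Q ∋ x} (1/(φ(|Q|)^η |Q|)) ∫_Q |f|` for real-valued `f`. -/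
def MphiEta (α₀ η : ℝ) (f : En n → ℝ) : En n → ℝ≥0∞ :=
  MphiG α₀ η (fun y => ENNReal.ofReal |f y|)

/-- `M_{φ,η} f` for complex-valued `f`. -/
def MphiEtaC (α₀ η : ℝ) (f : En n → ℂ) : En n → ℝ≥0∞ :=
  MphiG α₀ η (fun y => ENNReal.ofReal ‖f y‖)

/-- `ω ∈ A₁(φ)`: `M_φ ω ≤ C ω` a.e. -/
def MemA1Phi (α₀ : ℝ) (w : En n → ℝ) : Prop :=
  ∃ C > 0, ∀ᵐ x ∂(volume : Measure (En n)),
    MphiEta α₀ 1 w x ≤ ENNReal.ofReal (C * w x)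

/-- `ω ∈ A_p(φ)` for `1 < p`: the Muckenhoupt-type condition
`(1/(φ(|Q|)|Q|) ∫_Q ω) (1/(φ(|Q|)|Q|) ∫_Q ω^{-1/(p-1)})^{p-1} ≤ C` for all cubes `Q`. -/
def MemApPhiGT (α₀ p : ℝ) (w : En n → ℝ) : Prop :=
  ∃ C > 0, ∀ (c : En n) (r : ℝ), 0 < r →
    ((∫⁻ y in cube c r, ENNReal.ofReal (w y)) /
        (ENNReal.ofReal (phi α₀ (cubeVol c r)) * volume (cube c r))) *
      ((∫⁻ y in cube c r, ENNReal.ofReal (w y ^ (-(1 / (p - 1))))) /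
        (ENNReal.ofReal (phi α₀ (cubeVol c r)) * volume (cube c r))) ^ (p - 1) ≤
      ENNReal.ofReal C

/-- `ω ∈ A_p(φ)` for `1 ≤ p`. -/
def MemApPhi (α₀ p : ℝ) (w : En n → ℝ) : Prop :=
  if p = 1 then MemA1Phi α₀ w else MemApPhiGT α₀ p w

/-- `A_∞(φ) = ⋃_{p ≥ 1} A_p(φ)`. -/
def MemAInfPhi (α₀ : ℝ) (w : En n → ℝ) : Prop := ∃ p, 1 ≤ p ∧ MemApPhi α₀ p w

/-- `(∫ g^p dω)^{1/p}` for an `ℝ≥0∞`-valued `g`. -/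
def wLpNormG (p : ℝ) (w : En n → ℝ) (g : En n → ℝ≥0∞) : ℝ≥0∞ :=
  (∫⁻ x, (g x) ^ p ∂(wMeas w)) ^ (1 / p)

/-- The weighted norm `‖f‖_{L^p(ω)} = (∫ |f|^p ω dx)^{1/p}` for complex-valued `f`. -/
def wLpNormC (p : ℝ) (w : En n → ℝ) (f : En n → ℂ) : ℝ≥0∞ :=
  wLpNormG p w (fun x => ENNReal.ofReal ‖f x‖)

/-- The pseudo-differential operator with symbol `σ`:
`Tf(x) = ∫ σ(x,ξ) e^{2πi x·ξ} 𝓕f(ξ) dξ`. -/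
def pdo (σ : En n → En n → ℂ) (f : En n → ℂ) (x : En n) : ℂ :=
  ∫ ξ : En n, σ x ξ *
    Complex.exp (2 * (Real.pi : ℂ) * Complex.I * ((inner ℝ x ξ : ℝ) : ℂ)) * (𝓕 f) ξ

/-- The list of coordinate directions associated with a multi-index `α`,
with `i` repeated `α i` times. -/
def mIdxDirs (α : Fin n → ℕ) : List (En n) :=
  ((List.finRange n).map fun i => List.replicate (α i) (EuclideanSpace.single i (1 : ℝ))).flatten

/-- Iterated directional derivative along a list of directions. -/
def dirDeriv (L : List (En n)) (f : En n → ℂ) : En n → ℂ :=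
  L.foldr (fun v g => fun x => fderiv ℝ g x v) f

/-- `D_x^α D_ξ^β σ (x, ξ)`. -/
def symbolDeriv (σ : En n → En n → ℂ) (α β : Fin n → ℕ) (x ξ : En n) : ℂ :=
  dirDeriv (mIdxDirs β) (fun ξ' => dirDeriv (mIdxDirs α) (fun x' => σ x' ξ') x) ξ

/-- `σ ∈ S^m_{1,0}`: smooth with `|D_x^α D_ξ^β σ(x,ξ)| ≤ C_{α,β} (1+|ξ|)^{m-|β|}`. -/
def IsSymbol (m : ℝ) (σ : En n → En n → ℂ) : Prop :=
  ContDiff ℝ (⊤ : ℕ∞) (fun q : En n × En n => σ q.1 q.2) ∧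
  ∀ α β : Fin n → ℕ, ∃ C > 0, ∀ x ξ : En n,
    ‖symbolDeriv σ α β x ξ‖ ≤ C * (1 + ‖ξ‖) ^ (m - (∑ i, (β i : ℝ)))

/-- `σ ∈ S^{-∞}_{1,0}`: the symbol estimates hold for every order `m`. -/
def IsSymbolSmoothing (σ : En n → En n → ℂ) : Prop :=
  ContDiff ℝ (⊤ : ℕ∞) (fun q : En n × En n => σ q.1 q.2) ∧
  ∀ (m : ℝ) (α β : Fin n → ℕ), ∃ C > 0, ∀ x ξ : En n,
    ‖symbolDeriv σ α β x ξ‖ ≤ C * (1 + ‖ξ‖) ^ (m - (∑ i, (β i : ℝ)))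

/-- Average of a real function over a set. -/
def setAvg (S : Set (En n)) (f : En n → ℝ) : ℝ := (volume S).toReal⁻¹ * ∫ y in S, f y

/-- Average of a complex function over a set. -/
def setAvgC (S : Set (En n)) (f : En n → ℂ) : ℂ := ((volume S).toReal⁻¹ : ℝ) • ∫ y in S, f y

/-- Average `b_Q` of `b` over the cube `Q(c,r)`. -/
def cubeAvg (c : En n) (r : ℝ) (b : En n → ℝ) : ℝ := setAvg (cube c r) b

/-- The set of mean oscillations `(1/|Q|)∫_Q |b - b_Q|` over all cubes. -/
def bmoSet (b : En n → ℝ) : Set ℝ :=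
  {v | ∃ (c : En n) (r : ℝ), 0 < r ∧
    v = (cubeVol c r)⁻¹ * ∫ y in cube c r, |b y - cubeAvg c r b|}

/-- `‖b‖_{BMO}`. -/
def bmoNorm (b : En n → ℝ) : ℝ := sSup (bmoSet b)

/-- `b ∈ BMO(ℝⁿ)`. -/
def MemBMO (b : En n → ℝ) : Prop :=
  LocallyIntegrable b volume ∧ BddAbove (bmoSet b)

/-- The commutator `[b,T]f = b · Tf − T(bf)`. -/
def commutator (b : En n → ℝ) (σ : En n → En n → ℂ) (f : En n → ℂ) (x : En n) : ℂ :=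
  (b x : ℂ) * pdo σ f x - pdo σ (fun y => (b y : ℂ) * f y) x

/-- The sharp maximal operator `M^♯_{φ,η}` for real-valued `f`. -/
def MsharpEta (α₀ η : ℝ) (f : En n → ℝ) (x : En n) : ℝ≥0∞ :=
  (⨆ (c : En n) (r : ℝ) (_ : 0 < r) (_ : r < 1) (_ : x ∈ cube c r),
      (∫⁻ y in cube c r, ENNReal.ofReal |f y - setAvg (cube c r) f|) / volume (cube c r)) +
  (⨆ (c : En n) (r : ℝ) (_ : 1 ≤ r) (_ : x ∈ cube c r),
      (∫⁻ y in cube c r, ENNReal.ofReal |f y|) /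
        (ENNReal.ofReal ((phi α₀ (cubeVol c r)) ^ η) * volume (cube c r)))

/-- The sharp maximal operator `M^♯_{φ,η}` for complex-valued `f`. -/
def MsharpEtaC (α₀ η : ℝ) (f : En n → ℂ) (x : En n) : ℝ≥0∞ :=
  (⨆ (c : En n) (r : ℝ) (_ : 0 < r) (_ : r < 1) (_ : x ∈ cube c r),
      (∫⁻ y in cube c r, ENNReal.ofReal ‖f y - setAvgC (cube c r) f‖) / volume (cube c r)) +
  (⨆ (c : En n) (r : ℝ) (_ : 1 ≤ r) (_ : x ∈ cube c r),
      (∫⁻ y in cube c r, ENNReal.ofReal ‖f y‖) /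
        (ENNReal.ofReal ((phi α₀ (cubeVol c r)) ^ η) * volume (cube c r)))

/-- `M^♯_{δ,φ,η} f = (M^♯_{φ,η}(|f|^δ))^{1/δ}` for complex-valued `f`. -/
def MsharpDeltaEta (α₀ δ η : ℝ) (f : En n → ℂ) (x : En n) : ℝ≥0∞ :=
  (MsharpEta α₀ η (fun y => ‖f y‖ ^ δ) x) ^ (1 / δ)

/-- The dyadic cube `2^{-k}(m + [0,1)ⁿ)`. -/
def dyadicCube (k : ℤ) (m : Fin n → ℤ) : Set (En n) :=
  {x | ∀ i, (m i : ℝ) * (2 : ℝ) ^ (-k) ≤ x i ∧ x i < ((m i : ℝ) + 1) * (2 : ℝ) ^ (-k)}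

/-- The dyadic maximal operator `M^△_{φ,η}`. -/
def MdyadicEta (α₀ η : ℝ) (f : En n → ℝ) (x : En n) : ℝ≥0∞ :=
  ⨆ (k : ℤ) (m : Fin n → ℤ) (_ : x ∈ dyadicCube k m),
    (∫⁻ y in dyadicCube k m, ENNReal.ofReal |f y|) /
      (ENNReal.ofReal ((phi α₀ ((volume (dyadicCube k m)).toReal)) ^ η) *
        volume (dyadicCube k m))

/-- The dyadic sharp maximal operator `M^{♯,△}_{φ,η}`. -/
def MsharpDyadicEta (α₀ η : ℝ) (f : En n → ℝ) (x : En n) : ℝ≥0∞ :=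
  (⨆ (k : ℤ) (m : Fin n → ℤ) (_ : x ∈ dyadicCube k m) (_ : (2 : ℝ) ^ (-k) < 1),
      (∫⁻ y in dyadicCube k m, ENNReal.ofReal |f y - setAvg (dyadicCube k m) f|) /
        volume (dyadicCube k m)) +
  (⨆ (k : ℤ) (m : Fin n → ℤ) (_ : x ∈ dyadicCube k m) (_ : 1 ≤ (2 : ℝ) ^ (-k)),
      (∫⁻ y in dyadicCube k m, ENNReal.ofReal |f y|) /
        (ENNReal.ofReal ((phi α₀ ((volume (dyadicCube k m)).toReal)) ^ η) *
          volume (dyadicCube k m)))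

/-- The weighted maximal operator `M_ω f(x) = sup_{Q ∋ x} (1/ω(5Q)) ∫_Q |f| ω`. -/
def Mw (w : En n → ℝ) (f : En n → ℝ) (x : En n) : ℝ≥0∞ :=
  ⨆ (c : En n) (r : ℝ) (_ : 0 < r) (_ : x ∈ cube c r),
    (∫⁻ y in cube c r, ENNReal.ofReal |f y| * ENNReal.ofReal (w y)) /
      wMeas w (cube c (5 * r))

/-- The Young function `B(t) = Φ(t) = t(1 + log⁺ t)`. -/
def Bfun (t : ℝ) : ℝ := t * (1 + max (Real.log t) 0)

/-- The Luxemburg norm `‖f‖_{B,Q} = inf {λ > 0 : (1/|Q|)∫_Q B(|f|/λ) ≤ 1}` (real `f`). -/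
def luxNorm (S : Set (En n)) (f : En n → ℝ) : ℝ≥0∞ :=
  sInf (ENNReal.ofReal '' {lam : ℝ | 0 < lam ∧
    (∫⁻ y in S, ENNReal.ofReal (Bfun (|f y| / lam))) / volume S ≤ 1})

/-- The Luxemburg norm for complex `f`. -/
def luxNormC (S : Set (En n)) (f : En n → ℂ) : ℝ≥0∞ :=
  sInf (ENNReal.ofReal '' {lam : ℝ | 0 < lam ∧
    (∫⁻ y in S, ENNReal.ofReal (Bfun (‖f y‖ / lam))) / volume S ≤ 1})

/-- `M_{L log L, φ, η} f(x) = sup_{Q ∋ x} φ(|Q|)^{−η} ‖f‖_{L log L, Q}` (real `f`). -/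
def MLlogL (α₀ η : ℝ) (f : En n → ℝ) (x : En n) : ℝ≥0∞ :=
  ⨆ (c : En n) (r : ℝ) (_ : 0 < r) (_ : x ∈ cube c r),
    ENNReal.ofReal ((phi α₀ (cubeVol c r)) ^ (-η)) * luxNorm (cube c r) f

/-- `M_{L log L, φ, η} f` for complex `f`. -/
def MLlogLC (α₀ η : ℝ) (f : En n → ℂ) (x : En n) : ℝ≥0∞ :=
  ⨆ (c : En n) (r : ℝ) (_ : 0 < r) (_ : x ∈ cube c r),
    ENNReal.ofReal ((phi α₀ (cubeVol c r)) ^ (-η)) * luxNormC (cube c r) f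

end Paper

/-! If `M_{L log L,φ,η} f(x) > λ`, some cube `Q ∋ x` has `‖f‖_{L log L,Q} > λ φ(|Q|)^η`; as
`Φ(t/s) ≤ Φ(t)/s` for `s ≥ 1`, this forces `φ(|Q|)|Q| ≤ ∫_Q Φ(|f|/λ)`. The `A₁(φ)` condition for
`5Q`, read at almost every `z ∈ Q`, gives `ω(5Q) ≲ ω(z) φ(|Q|)|Q|`; integrating against
`Φ(|f|/λ)` over `Q` yields `ω(5Q) ≲ ∫_Q Φ(|f|/λ) ω`, and a Vitali covering by such cubes
concludes. -/

namespace Paper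

open Set

variable {n : ℕ}

lemma cube_eq_preimage (c : En n) (r : ℝ) :
    cube c r = (MeasurableEquiv.toLp 2 (Fin n → ℝ)).symm ⁻¹'
      univ.pi fun i => Icc (c i - r / 2) (c i + r / 2) := by
  ext x
  simp only [cube, mem_preimage, mem_univ_pi]
  refine forall_congr' fun i => ?_
  change |x i - c i| ≤ r / 2 ↔ c i - r / 2 ≤ x i ∧ x i ≤ c i + r / 2
  rw [abs_sub_le_iff]
  constructor <;> rintro ⟨h₁, h₂⟩ <;> constructor <;> linarith

lemma measurableSet_cube (c : En n) (r : ℝ) : MeasurableSet (cube c r) := by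
  rw [cube_eq_preimage]
  exact (MeasurableEquiv.toLp 2 (Fin n → ℝ)).symm.measurable
    (MeasurableSet.univ_pi fun _ => measurableSet_Icc)

lemma volume_cube (c : En n) {r : ℝ} (hr : 0 ≤ r) :
    volume (cube c r) = ENNReal.ofReal (r ^ n) := by
  rw [cube_eq_preimage,
    (EuclideanSpace.volume_preserving_symm_measurableEquiv_toLp (Fin n)).measure_preimage
      (MeasurableSet.univ_pi fun _ => measurableSet_Icc).nullMeasurableSet,
    volume_pi_pi]
  simp only [Real.volume_Icc, add_sub_sub_cancel, add_halves, Finset.prod_const,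
    Finset.card_univ, Fintype.card_fin, ENNReal.ofReal_pow hr]

lemma cube_mono (c : En n) {r r' : ℝ} (h : r ≤ r') : cube c r ⊆ cube c r' :=
  fun _ hx i => (hx i).trans (by linarith)

lemma cube_subset_cube_five_mul_of_inter {c₁ c₂ : En n} {r₁ r₂ : ℝ}
    (hne : (cube c₁ r₁ ∩ cube c₂ r₂).Nonempty) (hle : r₁ ≤ 2 * r₂) :
    cube c₁ r₁ ⊆ cube c₂ (5 * r₂) := by
  obtain ⟨z, hz₁, hz₂⟩ := hne
  intro y hy i
  linarith [abs_sub_le (y i) (z i) (c₂ i), abs_sub_le (y i) (c₁ i) (z i),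
    abs_sub_comm (c₁ i) (z i), hy i, hz₁ i, hz₂ i]

lemma closedBall_subset_cube_five_mul {c x : En n} {r K : ℝ} (hx : x ∈ cube c r)
    (hxK : ‖x‖ ≤ K) (hKr : K ≤ r) : Metric.closedBall 0 K ⊆ cube c (5 * r) := by
  intro y hy i
  have hyK : ‖y‖ ≤ K := by rwa [mem_closedBall_zero_iff] at hy
  have hyi : |y i| ≤ ‖y‖ := PiLp.norm_apply_le y i
  have hxi : |x i| ≤ ‖x‖ := PiLp.norm_apply_le x i
  linarith [abs_sub_le (y i) (x i) (c i), abs_sub (y i) (x i), hx i]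

lemma ball_subset_cube (c : En n) (r : ℝ) : Metric.ball c (r / 2) ⊆ cube c r := by
  intro x hx i
  have hxi : |(x - c) i| ≤ ‖x - c‖ := PiLp.norm_apply_le (x - c) i
  rw [mem_ball_iff_norm] at hx
  exact (hxi.trans hx.le :)

lemma nonempty_interior_cube (c : En n) {r : ℝ} (hr : 0 < r) : (interior (cube c r)).Nonempty :=
  ⟨c, interior_mono (ball_subset_cube c r) (mem_interior_iff_mem_nhds.2 <|
    Metric.ball_mem_nhds c (by positivity))⟩

lemma one_le_phi {α₀ t : ℝ} (hα : 0 ≤ α₀) (ht : 0 ≤ t) : 1 ≤ phi α₀ t :=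
  Real.one_le_rpow (by linarith) hα

lemma phi_mul_le {α₀ s t : ℝ} (hα : 0 ≤ α₀) (hs : 1 ≤ s) (ht : 0 ≤ t) :
    phi α₀ (s * t) ≤ s ^ α₀ * phi α₀ t := by
  rw [phi, phi, ← Real.mul_rpow (by linarith) (by linarith)]
  exact Real.rpow_le_rpow (by positivity) (by nlinarith) hα

/-- `φ(|Q|)|Q|` for the cube `Q = cube c r`. -/
def phiVol (α₀ : ℝ) (c : En n) (r : ℝ) : ℝ≥0∞ :=
  ENNReal.ofReal (phi α₀ (cubeVol c r)) * volume (cube c r)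

lemma phiVol_ne_zero {α₀ : ℝ} (hα : 0 ≤ α₀) (c : En n) {r : ℝ} (hr : 0 < r) :
    phiVol α₀ c r ≠ 0 := by
  have hφ : 1 ≤ phi α₀ (cubeVol c r) := one_le_phi hα ENNReal.toReal_nonneg
  rw [phiVol, volume_cube c hr.le]
  exact mul_ne_zero (by simp only [ne_eq, ENNReal.ofReal_eq_zero, not_le]; linarith)
    (by simp only [ne_eq, ENNReal.ofReal_eq_zero, not_le]; positivity)

lemma phiVol_ne_top (α₀ : ℝ) (c : En n) {r : ℝ} (hr : 0 ≤ r) : phiVol α₀ c r ≠ ∞ := by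
  rw [phiVol, volume_cube c hr]
  exact ENNReal.mul_ne_top ENNReal.ofReal_ne_top ENNReal.ofReal_ne_top

lemma phiVol_five_mul_le {α₀ : ℝ} (hα : 0 ≤ α₀) (c : En n) {r : ℝ} (hr : 0 ≤ r) :
    phiVol α₀ c (5 * r) ≤ ENNReal.ofReal (((5 : ℝ) ^ n) ^ α₀ * 5 ^ n) * phiVol α₀ c r := by
  have hvol : cubeVol c r = r ^ n := by
    rw [cubeVol, volume_cube c hr, ENNReal.toReal_ofReal (by positivity)]
  have hvol₅ : cubeVol c (5 * r) = 5 ^ n * r ^ n := by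
    rw [cubeVol, volume_cube c (by positivity), ENNReal.toReal_ofReal (by positivity), mul_pow]
  have hφ : phi α₀ (5 ^ n * r ^ n) ≤ ((5 : ℝ) ^ n) ^ α₀ * phi α₀ (r ^ n) :=
    phi_mul_le hα (one_le_pow₀ (by norm_num)) (by positivity)
  have hφ₀ : 0 ≤ phi α₀ (r ^ n) := zero_le_one.trans (one_le_phi hα (by positivity))
  have hφ₅ : 0 ≤ phi α₀ (5 ^ n * r ^ n) := zero_le_one.trans (one_le_phi hα (by positivity))
  rw [phiVol, phiVol, volume_cube c hr, volume_cube c (by positivity), hvol, hvol₅,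
    ← ENNReal.ofReal_mul hφ₅, ← ENNReal.ofReal_mul hφ₀,
    ← ENNReal.ofReal_mul (by positivity)]
  refine ENNReal.ofReal_le_ofReal ?_
  calc phi α₀ (5 ^ n * r ^ n) * (5 * r) ^ n
      ≤ ((5 : ℝ) ^ n) ^ α₀ * phi α₀ (r ^ n) * (5 ^ n * r ^ n) := by
        rw [mul_pow]; gcongr
    _ = ((5 : ℝ) ^ n) ^ α₀ * 5 ^ n * (phi α₀ (r ^ n) * r ^ n) := by ring

lemma MemA1Phi.exists_ae_wMeas_cube_le {α₀ : ℝ} (hα : 0 ≤ α₀) {w : En n → ℝ}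
    (hw : ∀ x, 0 ≤ w x) (hA1 : MemA1Phi α₀ w) :
    ∃ C > 0, ∀ᵐ z ∂(volume : Measure (En n)), ∀ c r, 0 < r → z ∈ cube c r →
      wMeas w (cube c r) ≤ ENNReal.ofReal C * ENNReal.ofReal (w z) * phiVol α₀ c r := by
  obtain ⟨C, hC, hae⟩ := hA1
  refine ⟨C, hC, ?_⟩
  filter_upwards [hae] with z hz c r hr hzc
  have hterm : wMeas w (cube c r) / phiVol α₀ c r ≤ MphiEta α₀ 1 w z := by
    have hw_abs : ∫⁻ y in cube c r, ENNReal.ofReal |w y| = wMeas w (cube c r) := by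
      rw [wMeas, withDensity_apply _ (measurableSet_cube c r)]
      exact lintegral_congr fun y => by rw [abs_of_nonneg (hw y)]
    rw [← hw_abs, phiVol, ← Real.rpow_one (phi α₀ _)]
    exact le_iSup_of_le c <| le_iSup_of_le r <| le_iSup_of_le hr <| le_iSup_of_le hzc le_rfl
  rw [← ENNReal.ofReal_mul hC.le]
  exact (ENNReal.div_le_iff (phiVol_ne_zero hα c hr) (phiVol_ne_top α₀ c hr.le)).1
    (hterm.trans hz)

lemma setLIntegral_wMeas {w : En n → ℝ} (hw : AEMeasurable w) (S : Set (En n))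
    (g : En n → ℝ≥0∞) :
    ∫⁻ y in S, g y ∂(wMeas w) = ∫⁻ y in S, ENNReal.ofReal (w y) * g y :=
  setLIntegral_withDensity_eq_setLIntegral_mul_non_measurable₀' _ S
    (ENNReal.measurable_ofReal.comp_aemeasurable hw).restrict g
    (Eventually.of_forall fun _ => ENNReal.ofReal_lt_top)

lemma wMeas_cube_five_mul_le {α₀ : ℝ} (hα : 0 ≤ α₀) {w : En n → ℝ} (hw : AEMeasurable w)
    {C : ℝ} (hae : ∀ᵐ z ∂(volume : Measure (En n)), ∀ c r, 0 < r → z ∈ cube c r →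
      wMeas w (cube c r) ≤ ENNReal.ofReal C * ENNReal.ofReal (w z) * phiVol α₀ c r)
    {g : En n → ℝ≥0∞} {c : En n} {r : ℝ} (hr : 0 < r)
    (hg : phiVol α₀ c r ≤ ∫⁻ y in cube c r, g y) :
    wMeas w (cube c (5 * r)) ≤ ENNReal.ofReal C * ENNReal.ofReal (((5 : ℝ) ^ n) ^ α₀ * 5 ^ n) *
      ∫⁻ y in cube c r, g y ∂(wMeas w) := by
  set K := ENNReal.ofReal C * ENNReal.ofReal (((5 : ℝ) ^ n) ^ α₀ * 5 ^ n)
  set T := phiVol α₀ c r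
  have hpoint : ∀ᵐ z ∂(volume.restrict (cube c r)),
      wMeas w (cube c (5 * r)) ≤ K * T * ENNReal.ofReal (w z) := by
    filter_upwards [ae_restrict_of_ae hae, ae_restrict_mem (measurableSet_cube c r)]
      with z hz hzc
    calc wMeas w (cube c (5 * r))
        ≤ ENNReal.ofReal C * ENNReal.ofReal (w z) * phiVol α₀ c (5 * r) :=
          hz c (5 * r) (by positivity) (cube_mono c (by linarith) hzc)
      _ ≤ ENNReal.ofReal C * ENNReal.ofReal (w z) *
            (ENNReal.ofReal (((5 : ℝ) ^ n) ^ α₀ * 5 ^ n) * T) := by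
          gcongr; exact phiVol_five_mul_le hα c hr.le
      _ = K * T * ENNReal.ofReal (w z) := by ring
  have hKT : K * T ≠ ∞ := ENNReal.mul_ne_top
    (ENNReal.mul_ne_top ENNReal.ofReal_ne_top ENNReal.ofReal_ne_top) (phiVol_ne_top α₀ c hr.le)
  refine (ENNReal.mul_le_mul_iff_left (phiVol_ne_zero hα c hr) (phiVol_ne_top α₀ c hr.le)).1 ?_
  calc wMeas w (cube c (5 * r)) * T
      ≤ wMeas w (cube c (5 * r)) * ∫⁻ y in cube c r, g y := by gcongr
    _ ≤ ∫⁻ y in cube c r, wMeas w (cube c (5 * r)) * g y := lintegral_const_mul_le _ _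
    _ ≤ ∫⁻ y in cube c r, K * T * (ENNReal.ofReal (w y) * g y) := by
        refine lintegral_mono_ae ?_
        filter_upwards [hpoint] with z hz
        rw [← mul_assoc]
        gcongr
    _ = K * (∫⁻ y in cube c r, g y ∂(wMeas w)) * T := by
        rw [lintegral_const_mul' _ _ hKT, setLIntegral_wMeas hw]
        ring

lemma Bfun_div_le {u s : ℝ} (hu : 0 ≤ u) (hs : 1 ≤ s) : Bfun (u / s) ≤ Bfun u / s := by
  have hlog : max (Real.log (u / s)) 0 ≤ max (Real.log u) 0 := by
    rcases hu.eq_or_lt with rfl | hu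
    · simp
    · exact max_le_max (Real.log_le_log (by positivity) (div_le_self hu.le hs)) le_rfl
  rw [Bfun, Bfun, div_mul_eq_mul_div]
  gcongr

lemma volume_mul_le_lintegral_Bfun_of_lt_luxNorm {S : Set (En n)} (hS₀ : volume S ≠ 0)
    (hS : volume S ≠ ∞) {f : En n → ℝ} {lam s : ℝ} (hlam : 0 < lam) (hs : 1 ≤ s)
    (h : ENNReal.ofReal (lam * s) < luxNorm S f) :
    volume S * ENNReal.ofReal s ≤ ∫⁻ y in S, ENNReal.ofReal (Bfun (|f y| / lam)) := by
  have hs₀ : ENNReal.ofReal s ≠ 0 := (ENNReal.ofReal_pos.2 (by linarith)).ne'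
  have hvol : volume S < ∫⁻ y in S, ENNReal.ofReal (Bfun (|f y| / (lam * s))) := by
    by_contra! hle
    refine h.not_ge (sInf_le ⟨lam * s, ⟨by positivity, ?_⟩, rfl⟩)
    rwa [ENNReal.div_le_iff hS₀ hS, one_mul]
  refine (ENNReal.mul_lt_of_lt_div (hvol.trans_le ?_)).le
  rw [ENNReal.div_eq_inv_mul, ← lintegral_const_mul' _ _ (ENNReal.inv_ne_top.2 hs₀)]
  refine lintegral_mono fun y => ?_
  rw [← div_div, ← ENNReal.div_eq_inv_mul, ← ENNReal.ofReal_div_of_pos (by linarith)]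
  exact ENNReal.ofReal_le_ofReal (Bfun_div_le (by positivity) hs)

lemma exists_cube_of_lt_MLlogL {α₀ η : ℝ} (hα : 0 ≤ α₀) (hη : 1 ≤ η) {f : En n → ℝ}
    {lam : ℝ} (hlam : 0 < lam) {x : En n} (hx : ENNReal.ofReal lam < MLlogL α₀ η f x) :
    ∃ c r, 0 < r ∧ x ∈ cube c r ∧
      phiVol α₀ c r ≤ ∫⁻ y in cube c r, ENNReal.ofReal (Bfun (|f y| / lam)) := by
  simp only [MLlogL, lt_iSup_iff] at hx
  obtain ⟨c, r, hr, hxc, hlt⟩ := hx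
  refine ⟨c, r, hr, hxc, ?_⟩
  have hφ : 1 ≤ phi α₀ (cubeVol c r) := one_le_phi hα ENNReal.toReal_nonneg
  set s := phi α₀ (cubeVol c r) ^ η
  have hs : 1 ≤ s := Real.one_le_rpow hφ (by linarith)
  have hlux : ENNReal.ofReal (lam * s) < luxNorm (cube c r) f := by
    by_contra! hle
    refine hlt.not_ge ?_
    calc ENNReal.ofReal (phi α₀ (cubeVol c r) ^ (-η)) * luxNorm (cube c r) f
        ≤ ENNReal.ofReal (phi α₀ (cubeVol c r) ^ (-η)) * ENNReal.ofReal (lam * s) := by gcongr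
      _ = ENNReal.ofReal lam := by
          rw [← ENNReal.ofReal_mul (by positivity), Real.rpow_neg (by linarith), mul_left_comm, inv_mul_cancel₀ (zero_lt_one.trans_le hs).ne', mul_one]
  calc phiVol α₀ c r = volume (cube c r) * ENNReal.ofReal (phi α₀ (cubeVol c r) ^ (1 : ℝ)) := by
        rw [phiVol, Real.rpow_one, mul_comm]
    _ ≤ volume (cube c r) * ENNReal.ofReal s := by
        gcongr
        exact Real.rpow_le_rpow_of_exponent_le hφ hη
    _ ≤ _ := volume_mul_le_lintegral_Bfun_of_lt_luxNorm
        (by rw [volume_cube c hr.le]; exact (ENNReal.ofReal_pos.2 (by positivity)).ne')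
        (by rw [volume_cube c hr.le]; exact ENNReal.ofReal_ne_top) hlam hs hlux

lemma measure_le_of_forall_mem_cube_of_subset_closedBall {μ ν : Measure (En n)} {E : Set (En n)}
    {K : ℝ} (hEK : E ⊆ Metric.closedBall 0 K) {c : En n → En n} {r : En n → ℝ}
    (hr : ∀ x ∈ E, 0 < r x) (hxc : ∀ x ∈ E, x ∈ cube (c x) (r x))
    (hμν : ∀ x ∈ E, μ (cube (c x) (5 * r x)) ≤ ν (cube (c x) (r x))) : μ E ≤ ν univ := by
  by_cases hbig : ∃ x ∈ E, K ≤ r x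
  · obtain ⟨x, hx, hKr⟩ := hbig
    calc μ E ≤ μ (cube (c x) (5 * r x)) :=
          measure_mono <| hEK.trans <| closedBall_subset_cube_five_mul (hxc x hx)
            (mem_closedBall_zero_iff.1 (hEK hx)) hKr
      _ ≤ ν univ := (hμν x hx).trans (measure_mono (subset_univ _))
  push Not at hbig
  obtain ⟨u, huE, hdisj, hcover⟩ := Vitali.exists_disjoint_subfamily_covering_enlargement
    (fun x => cube (c x) (r x)) E r 2 one_lt_two (fun x hx => (hr x hx).le) K
    (fun x hx => (hbig x hx).le) (fun x hx => ⟨x, hxc x hx⟩)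
  have hu : u.Countable :=
    hdisj.countable_of_nonempty_interior fun x hx => nonempty_interior_cube _ (hr x (huE hx))
  have hEu : E ⊆ ⋃ x ∈ u, cube (c x) (5 * r x) := by
    intro y hy
    obtain ⟨x, hxu, hinter, hle⟩ := hcover y hy
    exact mem_biUnion hxu (cube_subset_cube_five_mul_of_inter hinter hle (hxc y hy))
  calc μ E ≤ μ (⋃ x ∈ u, cube (c x) (5 * r x)) := measure_mono hEu
    _ ≤ ∑' x : u, μ (cube (c x) (5 * r x)) := measure_biUnion_le _ hu _
    _ ≤ ∑' x : u, ν (cube (c x) (r x)) :=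
        ENNReal.tsum_le_tsum fun x => hμν x (huE x.2)
    _ = ν (⋃ x ∈ u, cube (c x) (r x)) :=
        (measure_biUnion hu hdisj fun x _ => measurableSet_cube _ _).symm
    _ ≤ ν univ := measure_mono (subset_univ _)

lemma measure_le_of_forall_mem_cube {μ ν : Measure (En n)} {E : Set (En n)}
    (h : ∀ x ∈ E, ∃ c r, 0 < r ∧ x ∈ cube c r ∧ μ (cube c (5 * r)) ≤ ν (cube c r)) :
    μ E ≤ ν univ := by
  choose! c r hr hxc hμν using h
  have hmono : Monotone fun k : ℕ => E ∩ Metric.closedBall 0 k := fun k l hkl =>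
    inter_subset_inter_right _ (Metric.closedBall_subset_closedBall (by exact_mod_cast hkl))
  calc μ E = μ (⋃ k : ℕ, E ∩ Metric.closedBall 0 k) := by
        rw [← inter_iUnion, Metric.iUnion_closedBall_nat, inter_univ]
    _ = ⨆ k : ℕ, μ (E ∩ Metric.closedBall 0 k) := hmono.measure_iUnion
    _ ≤ ν univ := iSup_le fun k =>
        measure_le_of_forall_mem_cube_of_subset_closedBall inter_subset_right
          (fun x hx => hr x hx.1) (fun x hx => hxc x hx.1) (fun x hx => hμν x hx.1)

end Paper

open Paper MeasureTheory Real
open scoped ENNReal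

theorem stmt18_general {n : ℕ} {α₀ : ℝ} (hα₀ : 0 < α₀)
    (w : En n → ℝ) (hw : IsWeight w) (hA1 : MemA1Phi α₀ w) {η : ℝ} (hη : 2 ≤ η) :
    ∃ C > 0, ∀ (f : En n → ℝ) (lam : ℝ), 0 < lam →
      wMeas w {x | ENNReal.ofReal lam < MLlogL α₀ η f x} ≤
        ENNReal.ofReal C * ∫⁻ y, ENNReal.ofReal (Bfun (|f y| / lam)) ∂(wMeas w) := by
  have hwm : AEMeasurable w := hw.2.aestronglyMeasurable.aemeasurable
  obtain ⟨C, hC, hae⟩ := hA1.exists_ae_wMeas_cube_le hα₀.le fun x => (hw.1 x).le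
  set K : ℝ := ((5 : ℝ) ^ n) ^ α₀ * 5 ^ n
  refine ⟨C * K, by positivity, fun f lam hlam => ?_⟩
  set g : En n → ℝ≥0∞ := fun y => ENNReal.ofReal (Bfun (|f y| / lam))
  set ν := ENNReal.ofReal (C * K) • (wMeas w).withDensity g
  have hν : ∀ S, MeasurableSet S → ν S = ENNReal.ofReal (C * K) * ∫⁻ y in S, g y ∂(wMeas w) :=
    fun S hS => by rw [Measure.smul_apply, withDensity_apply _ hS, smul_eq_mul]
  rw [← setLIntegral_univ, ← hν Set.univ MeasurableSet.univ]
  refine measure_le_of_forall_mem_cube fun x hx => ?_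
  obtain ⟨c, r, hr, hxc, hg⟩ := exists_cube_of_lt_MLlogL hα₀.le (by linarith) hlam hx
  refine ⟨c, r, hr, hxc, ?_⟩
  rw [hν _ (measurableSet_cube c r), ENNReal.ofReal_mul hC.le]
  exact wMeas_cube_five_mul_le hα₀.le hwm hae hr hg

theorem stmt18 {n : ℕ} (hn : 1 ≤ n) {α₀ : ℝ} (hα₀ : 0 < α₀)
    (w : En n → ℝ) (hw : IsWeight w) (hA1 : MemA1Phi α₀ w) {η : ℝ} (hη : 2 ≤ η) :
    ∃ C > 0, ∀ (f : En n → ℝ) (lam : ℝ), 0 < lam →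
      wMeas w {x | ENNReal.ofReal lam < MLlogL α₀ η f x} ≤
        ENNReal.ofReal C * ∫⁻ y, ENNReal.ofReal (Bfun (|f y| / lam)) ∂(wMeas w) :=
  stmt18_general hα₀ w hw hA1 hη
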